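/- arXiv:1411.4419 — 2 statements merged into one kernel-verified Lean document; each statement's English description precedes it below -/
import Mathlib

section
/- Let D be a nonzero real m×n matrix with skinny SVD D = U S Vᵀ, where U is m×r with UᵀU = Iᵣ, V is n×r with VᵀV = Iᵣ, and S is an r×r diagonal matrix with positive diagonal entries. If a real n×n matrix X satisfies D = D X and ‖X‖_F = ‖V Vᵀ‖_F, then X = V Vᵀ. That is, C* = V Vᵀ is the unique minimizer of ‖C‖_F subject to D = D C. -/
open Matrix

/-- The Frobenius norm of a real matrix: ‖M‖_F = sqrt(trace(M Mᵀ)). -/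
noncomputable def frobeniusNorm {m n : ℕ} (M : Matrix (Fin m) (Fin n) ℝ) : ℝ :=
  Real.sqrt (Matrix.trace (M * Mᵀ))

lemma trace_mul_transpose_eq {m n : ℕ} (M : Matrix (Fin m) (Fin n) ℝ) :
    Matrix.trace (M * Mᵀ) = ∑ i, ∑ j, (M i j) ^ 2 := by
  simp [Matrix.trace, Matrix.mul_apply, Matrix.diag, sq]

lemma trace_mul_transpose_nonneg {m n : ℕ} (M : Matrix (Fin m) (Fin n) ℝ) :
    0 ≤ Matrix.trace (M * Mᵀ) := by
  rw [trace_mul_transpose_eq]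
  exact Finset.sum_nonneg fun i _ => Finset.sum_nonneg fun j _ => sq_nonneg _

/-- For a nonzero real m×n matrix D with skinny SVD D = U S Vᵀ,
if a real n×n matrix X satisfies D = D X and ‖X‖_F = ‖V Vᵀ‖_F, then X = V Vᵀ;
i.e., C* = V Vᵀ is the unique minimizer of ‖C‖_F subject to D = D C. -/
theorem stmt_2 {m n r : ℕ}
    (D : Matrix (Fin m) (Fin n) ℝ) (hD : D ≠ 0)
    (U : Matrix (Fin m) (Fin r) ℝ) (S : Matrix (Fin r) (Fin r) ℝ)
    (V : Matrix (Fin n) (Fin r) ℝ)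
    (hSVD : D = U * S * Vᵀ)
    (hU : Uᵀ * U = 1) (hV : Vᵀ * V = 1)
    (hSdiag : ∀ i j : Fin r, i ≠ j → S i j = 0)
    (hSpos : ∀ i : Fin r, 0 < S i i) :
    ∀ X : Matrix (Fin n) (Fin n) ℝ, D = D * X →
      frobeniusNorm X = frobeniusNorm (V * Vᵀ) → X = V * Vᵀ := by
  intro X hX hnorm
  -- Step 1: S * Vᵀ = S * Vᵀ * X
  have h0 : U * S * Vᵀ = U * S * Vᵀ * X := by rw [← hSVD]; exact hX
  have h1 : S * Vᵀ = S * Vᵀ * X := by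
    have h := congrArg (fun M => Uᵀ * M) h0
    simpa [← Matrix.mul_assoc, hU] using h
  -- Step 2: S is invertible (diagonal with positive entries), so Vᵀ = Vᵀ * X
  have hS : S = Matrix.diagonal (fun i => S i i) := by
    ext i j
    by_cases h : i = j
    · subst h; simp [Matrix.diagonal]
    · simp [Matrix.diagonal, h, hSdiag i j h]
  have hDS : Matrix.diagonal (fun i => (S i i)⁻¹) * S = 1 := by
    calc Matrix.diagonal (fun i => (S i i)⁻¹) * S
        = Matrix.diagonal (fun i => (S i i)⁻¹) * Matrix.diagonal (fun i => S i i) := by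
          rw [← hS]
      _ = 1 := by
          rw [Matrix.diagonal_mul_diagonal]
          have : (fun i => (S i i)⁻¹ * S i i) = fun _ => (1 : ℝ) := by
            funext i; exact inv_mul_cancel₀ (ne_of_gt (hSpos i))
          rw [this, Matrix.diagonal_one]
  have h2 : Vᵀ * X = Vᵀ := by
    have h := congrArg (fun M => Matrix.diagonal (fun i => (S i i)⁻¹) * M) h1
    simp only [← Matrix.mul_assoc, hDS, Matrix.one_mul] at h
    exact h.symm
  -- Step 3: Y := X - V * Vᵀ satisfies Vᵀ * Y = 0
  set Y := X - V * Vᵀ with hY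
  have hVY : Vᵀ * Y = 0 := by
    rw [hY, Matrix.mul_sub, h2, ← Matrix.mul_assoc, hV, Matrix.one_mul, sub_self]
  have hYtV : Yᵀ * V = 0 := by
    have := congrArg Matrix.transpose hVY
    simpa using this
  -- Step 4: trace(X Xᵀ) = trace(VVᵀ (VVᵀ)ᵀ) + trace(Y Yᵀ)
  have hXdecomp : X = V * Vᵀ + Y := by rw [hY]; abel
  have cross1 : Matrix.trace ((V * Vᵀ) * Yᵀ) = 0 := by
    rw [Matrix.mul_assoc, Matrix.trace_mul_comm]
    rw [Matrix.mul_assoc, hYtV, Matrix.mul_zero, Matrix.trace_zero]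
  have cross2 : Matrix.trace (Y * (V * Vᵀ)ᵀ) = 0 := by
    rw [Matrix.transpose_mul, Matrix.transpose_transpose, ← Matrix.mul_assoc,
      Matrix.trace_mul_comm, ← Matrix.mul_assoc, hVY, Matrix.zero_mul,
      Matrix.trace_zero]
  have htrace : Matrix.trace (X * Xᵀ) =
      Matrix.trace ((V * Vᵀ) * (V * Vᵀ)ᵀ) + Matrix.trace (Y * Yᵀ) := by
    rw [hXdecomp]
    rw [Matrix.transpose_add, Matrix.add_mul, Matrix.mul_add, Matrix.mul_add]
    simp only [Matrix.trace_add, cross1, cross2]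
    ring
  -- Step 5: equal Frobenius norms force trace(Y Yᵀ) = 0
  have hXnn := trace_mul_transpose_nonneg X
  have hAnn := trace_mul_transpose_nonneg (V * Vᵀ)
  have hYnn := trace_mul_transpose_nonneg Y
  have htr_eq : Matrix.trace (X * Xᵀ) = Matrix.trace ((V * Vᵀ) * (V * Vᵀ)ᵀ) := by
    have h := congrArg (fun t => t ^ 2) hnorm
    simp only [frobeniusNorm] at h
    rwa [Real.sq_sqrt hXnn, Real.sq_sqrt hAnn] at h
  have hYzero : Matrix.trace (Y * Yᵀ) = 0 := by linarith
  -- Step 6: trace(Y Yᵀ) = 0 implies Y = 0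
  have hY0 : Y = 0 := by
    rw [trace_mul_transpose_eq] at hYzero
    ext i j
    have h1 : ∀ i ∈ Finset.univ, (0:ℝ) ≤ ∑ j, (Y i j) ^ 2 :=
      fun i _ => Finset.sum_nonneg fun j _ => sq_nonneg _
    have h2 := (Finset.sum_eq_zero_iff_of_nonneg h1).mp hYzero i (Finset.mem_univ i)
    have h3 : ∀ j ∈ Finset.univ, (0:ℝ) ≤ (Y i j) ^ 2 := fun j _ => sq_nonneg _
    have h4 := (Finset.sum_eq_zero_iff_of_nonneg h3).mp h2 j (Finset.mem_univ j)
    simpa using pow_eq_zero_iff (n := 2) (by norm_num) |>.mp h4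
  have : X - V * Vᵀ = 0 := hY0
  ext i j
  have := congrFun (congrFun this i) j
  simpa [sub_eq_zero] using this
end

section
/- Let D be a real m×n matrix with full SVD D = U Σ Vᵀ, where U is m×m orthogonal, V is n×n orthogonal, and Σ is m×n with diagonal entries σ₁ ≥ σ₂ ≥ … ≥ σ_q ≥ 0 (q = min(m,n)), all σᵢ > 0 for i ≤ k. Let λ > 0 and let 1 ≤ k ≤ q. Let U_k (resp. V_k) consist of the first k columns of U (resp. V), let Σ_k be the k×k diagonal matrix of σ₁,…,σ_k, and set D₀ = U_k Σ_k V_kᵀ and C* = V_k V_kᵀ. Then the pair (C*, D₀) is feasible, i.e., D₀ = D₀ C*, and its PCE objective value equals (1/2) k + (λ/2) Σᵢ₌ₖ₊₁^q σᵢ². -/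
/-!
Since `D vⱼ = σⱼ uⱼ` for the leading right singular vectors, `D₀ = U_k Σ_k V_kᵀ = D C*`, where
`C* = V_k V_kᵀ` is the orthogonal projection onto the span of `v₁, …, v_k`. Feasibility is then
`C* C* = C*`, and `‖C*‖_F² = trace C* = k`. By Pythagoras, `‖D - D C*‖_F² = ‖D‖_F² - ‖D C*‖_F²`,
and invariance of the Frobenius norm under multiplication by matrices with orthonormal columns
turns this into `‖Σ‖_F² - ‖Σ_k‖_F² = ∑_{i > k} σᵢ²`.
-/

open Matrix

theorem Fin.sum_univ_eq_sum_castLE_add_sum_filter_le {M : Type*} [AddCommMonoid M] {q k : ℕ}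
    (hk : k ≤ q) (f : Fin q → M) :
    ∑ t, f t = ∑ t : Fin k, f (Fin.castLE hk t) +
      ∑ t ∈ Finset.univ.filter (fun t : Fin q => k ≤ (t : ℕ)), f t := by
  rw [← Finset.sum_filter_not_add_sum_filter _ (fun t : Fin q => k ≤ (t : ℕ))]
  congr 1
  refine (Finset.sum_of_injOn (Fin.castLE hk) (Fin.castLE_injective hk).injOn
    (fun t _ => by simp) (fun t ht hnot => ?_) (fun _ _ => rfl)).symm
  simp only [Finset.mem_filter, Finset.mem_univ, true_and, not_le] at ht
  exact absurd ⟨⟨t, ht⟩, by simp, rfl⟩ hnot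

namespace Matrix

variable {R ι κ : Type*} [Semiring R] [Fintype ι]

theorem transpose_mul_self_submatrix_id_eq_one [DecidableEq ι] [DecidableEq κ]
    {V : Matrix ι ι R} (hV : Vᵀ * V = 1) {e : κ → ι} (he : Function.Injective e) :
    (V.submatrix id e)ᵀ * V.submatrix id e = 1 := by
  rw [transpose_submatrix, ← submatrix_mul _ _ _ _ _ Function.bijective_id, hV,
    submatrix_one _ he]

theorem trace_mul_transpose_self_eq_sum_sq [Fintype κ] (M : Matrix ι κ R) :
    trace (M * Mᵀ) = ∑ i, ∑ j, M i j ^ 2 := by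
  simp [trace, mul_apply, sq]

end Matrix

section Frobenius

variable {m n p k : ℕ}

theorem frobeniusNorm_sq (M : Matrix (Fin m) (Fin n) ℝ) :
    frobeniusNorm M ^ 2 = trace (M * Mᵀ) :=
  Real.sq_sqrt (by rw [trace_mul_transpose_self_eq_sum_sq]; positivity)

theorem frobeniusNorm_mul_of_transpose_mul_self {Q : Matrix (Fin p) (Fin m) ℝ}
    (hQ : Qᵀ * Q = 1) (A : Matrix (Fin m) (Fin n) ℝ) :
    frobeniusNorm (Q * A) = frobeniusNorm A := by
  unfold frobeniusNorm
  rw [trace_mul_comm, transpose_mul, Matrix.mul_assoc, ← Matrix.mul_assoc Qᵀ, hQ,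
    Matrix.one_mul, trace_mul_comm]

theorem frobeniusNorm_mul_transpose_of_transpose_mul_self {Q : Matrix (Fin p) (Fin n) ℝ}
    (hQ : Qᵀ * Q = 1) (A : Matrix (Fin m) (Fin n) ℝ) :
    frobeniusNorm (A * Qᵀ) = frobeniusNorm A := by
  unfold frobeniusNorm
  rw [transpose_mul, transpose_transpose, Matrix.mul_assoc, ← Matrix.mul_assoc Qᵀ, hQ,
    Matrix.one_mul]

theorem frobeniusNorm_one_sq : frobeniusNorm (1 : Matrix (Fin k) (Fin k) ℝ) ^ 2 = k := by
  simp [frobeniusNorm_sq]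

theorem frobeniusNorm_mul_transpose_self_sq {Q : Matrix (Fin p) (Fin k) ℝ} (hQ : Qᵀ * Q = 1) :
    frobeniusNorm (Q * Qᵀ) ^ 2 = k := by
  have hQ1 : Q * Qᵀ = Q * ((1 : Matrix (Fin k) (Fin k) ℝ) * Qᵀ) := by rw [Matrix.one_mul]
  rw [hQ1, frobeniusNorm_mul_of_transpose_mul_self hQ,
    frobeniusNorm_mul_transpose_of_transpose_mul_self hQ, frobeniusNorm_one_sq]

theorem frobeniusNorm_diagonal_sq (d : Fin k → ℝ) :
    frobeniusNorm (diagonal d) ^ 2 = ∑ t, d t ^ 2 := by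
  rw [frobeniusNorm_sq, trace_mul_transpose_self_eq_sum_sq]
  simp [diagonal_apply, ite_pow]

theorem frobeniusNorm_sq_of_rectangular_diagonal (M : Matrix (Fin m) (Fin n) ℝ)
    (hM : ∀ (i : Fin m) (j : Fin n), (i : ℕ) ≠ j → M i j = 0) :
    frobeniusNorm M ^ 2 = ∑ t : Fin (min m n),
      M (Fin.castLE (min_le_left m n) t) (Fin.castLE (min_le_right m n) t) ^ 2 := by
  rw [frobeniusNorm_sq, trace_mul_transpose_self_eq_sum_sq, ← Fintype.sum_prod_type']
  refine (Fintype.sum_of_injective (fun t => (Fin.castLE (min_le_left m n) t,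
    Fin.castLE (min_le_right m n) t)) ?_ _ (fun p => M p.1 p.2 ^ 2) ?_ (fun _ => rfl)).symm
  · intro s t hst
    simpa [Fin.ext_iff] using congrArg (fun p => (p.1 : ℕ)) hst
  · rintro ⟨i, j⟩ hij
    have hne : (i : ℕ) ≠ j := by
      rintro h
      refine hij ⟨⟨i, lt_min i.isLt (h ▸ j.isLt)⟩, ?_⟩
      simp [Prod.ext_iff, Fin.ext_iff, h]
    simp [hM i j hne]

theorem frobeniusNorm_sub_mul_sq {C : Matrix (Fin n) (Fin n) ℝ} (hC : Cᵀ = C)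
    (hCC : C * C = C) (D : Matrix (Fin m) (Fin n) ℝ) :
    frobeniusNorm (D - D * C) ^ 2 = frobeniusNorm D ^ 2 - frobeniusNorm (D * C) ^ 2 := by
  have hexpand : (D - D * C) * (D - D * C)ᵀ = D * Dᵀ - D * C * (D * C)ᵀ := by
    simp only [transpose_sub, transpose_mul, hC, Matrix.sub_mul, Matrix.mul_sub,
      Matrix.mul_assoc, ← Matrix.mul_assoc C C, hCC]
    abel
  rw [frobeniusNorm_sq, frobeniusNorm_sq, frobeniusNorm_sq, hexpand, trace_sub]

end Frobenius

/-- `D vⱼ = σⱼ uⱼ` for `j < k`, written for the blocks of leading columns. -/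
theorem mul_submatrix_castLE_eq_of_svd {m n k : ℕ} (hkm : k ≤ m) (hkn : k ≤ n)
    (U : Matrix (Fin m) (Fin m) ℝ) (S : Matrix (Fin m) (Fin n) ℝ) {V : Matrix (Fin n) (Fin n) ℝ}
    (hV : Vᵀ * V = 1) (hS : ∀ (i : Fin m) (j : Fin n), (i : ℕ) ≠ j → S i j = 0) :
    U * S * Vᵀ * V.submatrix id (Fin.castLE hkn) =
      U.submatrix id (Fin.castLE hkm) *
        diagonal (fun t => S (Fin.castLE hkm t) (Fin.castLE hkn t)) := by
  have hcols : S * (Vᵀ * V.submatrix id (Fin.castLE hkn)) =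
      (1 : Matrix (Fin m) (Fin m) ℝ).submatrix id (Fin.castLE hkm) *
        diagonal (fun t => S (Fin.castLE hkm t) (Fin.castLE hkn t)) := by
    ext i t
    change (S * (Vᵀ * V)) i (Fin.castLE hkn t) = _
    rw [hV, Matrix.mul_one, mul_diagonal, submatrix_apply, id, one_apply]
    by_cases h : i = Fin.castLE hkm t
    · rw [if_pos h, one_mul, h]
    · rw [if_neg h, zero_mul, hS i _ (fun h' => h (Fin.ext h'))]
  rw [Matrix.mul_assoc, Matrix.mul_assoc, hcols, ← Matrix.mul_assoc]
  congr 1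
  ext a t
  change (U * (1 : Matrix (Fin m) (Fin m) ℝ)) a (Fin.castLE hkm t) = _
  rw [Matrix.mul_one]
  rfl

theorem stmt_11_general {m n k : ℕ}
    (D : Matrix (Fin m) (Fin n) ℝ)
    (U : Matrix (Fin m) (Fin m) ℝ) (Sig : Matrix (Fin m) (Fin n) ℝ)
    (V : Matrix (Fin n) (Fin n) ℝ)
    (σ : Fin (min m n) → ℝ)
    (hSVD : D = U * Sig * Vᵀ)
    (hU : Uᵀ * U = 1) (hV : Vᵀ * V = 1)
    (hSigdiag : ∀ (i : Fin m) (j : Fin n), (i : ℕ) ≠ (j : ℕ) → Sig i j = 0)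
    (hσ : ∀ i : Fin (min m n),
      σ i = Sig ⟨i, lt_of_lt_of_le i.isLt (min_le_left m n)⟩
              ⟨i, lt_of_lt_of_le i.isLt (min_le_right m n)⟩)
    (lam : ℝ)
    (hk : k ≤ min m n)
    (Uk : Matrix (Fin m) (Fin k) ℝ)
    (hUk : ∀ (i : Fin m) (j : Fin k),
      Uk i j = U i ⟨j, lt_of_lt_of_le j.isLt (le_trans hk (min_le_left m n))⟩)
    (Vk : Matrix (Fin n) (Fin k) ℝ)
    (hVk : ∀ (i : Fin n) (j : Fin k),
      Vk i j = V i ⟨j, lt_of_lt_of_le j.isLt (le_trans hk (min_le_right m n))⟩)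
    (Sk : Matrix (Fin k) (Fin k) ℝ)
    (hSk : Sk = Matrix.diagonal (fun i : Fin k => σ ⟨i, lt_of_lt_of_le i.isLt hk⟩))
    (D₀ : Matrix (Fin m) (Fin n) ℝ) (Cstar : Matrix (Fin n) (Fin n) ℝ)
    (hD₀ : D₀ = Uk * Sk * Vkᵀ) (hCstar : Cstar = Vk * Vkᵀ) :
    D₀ = D₀ * Cstar ∧
      (1 / 2) * (frobeniusNorm Cstar) ^ 2 + (lam / 2) * (frobeniusNorm (D - D₀)) ^ 2 =
        (1 / 2) * (k : ℝ) +
          (lam / 2) *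
            ∑ i ∈ Finset.univ.filter (fun i : Fin (min m n) => k ≤ (i : ℕ)), (σ i) ^ 2 := by
  have hkm := hk.trans (min_le_left m n)
  have hkn := hk.trans (min_le_right m n)
  have hUk_eq : Uk = U.submatrix id (Fin.castLE hkm) := Matrix.ext hUk
  have hVk_eq : Vk = V.submatrix id (Fin.castLE hkn) := Matrix.ext hVk
  have hUkUk : Ukᵀ * Uk = 1 := by
    rw [hUk_eq]; exact transpose_mul_self_submatrix_id_eq_one hU (Fin.castLE_injective hkm)
  have hVkVk : Vkᵀ * Vk = 1 := by
    rw [hVk_eq]; exact transpose_mul_self_submatrix_id_eq_one hV (Fin.castLE_injective hkn)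
  have hDVk : D * Vk = Uk * Sk := by
    rw [hSVD, hUk_eq, hVk_eq, mul_submatrix_castLE_eq_of_svd hkm hkn U Sig hV hSigdiag, hSk]
    simp only [hσ]
    rfl
  have hCC : Cstar * Cstar = Cstar := by
    rw [hCstar, Matrix.mul_assoc, ← Matrix.mul_assoc Vkᵀ, hVkVk, Matrix.one_mul]
  have hD₀C : D₀ = D * Cstar := by rw [hD₀, hCstar, ← Matrix.mul_assoc, hDVk]
  refine ⟨by rw [hD₀C, Matrix.mul_assoc, hCC], ?_⟩
  have hres : frobeniusNorm (D - D₀) ^ 2 =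
      ∑ t, σ t ^ 2 - ∑ t : Fin k, σ (Fin.castLE hk t) ^ 2 := by
    rw [hD₀C, frobeniusNorm_sub_mul_sq (by rw [hCstar, transpose_mul, transpose_transpose]) hCC,
      ← hD₀C, hD₀, frobeniusNorm_mul_transpose_of_transpose_mul_self hVkVk,
      frobeniusNorm_mul_of_transpose_mul_self hUkUk, hSVD,
      frobeniusNorm_mul_transpose_of_transpose_mul_self hV,
      frobeniusNorm_mul_of_transpose_mul_self hU,
      frobeniusNorm_sq_of_rectangular_diagonal Sig hSigdiag, hSk, frobeniusNorm_diagonal_sq]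
    simp only [hσ]
    rfl
  rw [hCstar, frobeniusNorm_mul_transpose_self_sq hVkVk, hres,
    Fin.sum_univ_eq_sum_castLE_add_sum_filter_le hk, add_sub_cancel_left]

/-- Let D = U Σ Vᵀ be a full SVD of a real m×n matrix D with
singular values σ₁ ≥ … ≥ σ_q ≥ 0 (q = min(m,n)), with σᵢ > 0 for i ≤ k, let
λ > 0 and 1 ≤ k ≤ q. With U_k, V_k the first k columns of U, V, Σ_k the k×k
diagonal matrix of σ₁,…,σ_k, D₀ = U_k Σ_k V_kᵀ and C* = V_k V_kᵀ, the pair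
(C*, D₀) is feasible (D₀ = D₀ C*) and its PCE objective value equals
(1/2) k + (λ/2) Σ_{i=k+1}^{q} σᵢ². -/
theorem stmt_11 {m n k : ℕ}
    (D : Matrix (Fin m) (Fin n) ℝ)
    (U : Matrix (Fin m) (Fin m) ℝ) (Sig : Matrix (Fin m) (Fin n) ℝ)
    (V : Matrix (Fin n) (Fin n) ℝ)
    (σ : Fin (min m n) → ℝ)
    (hSVD : D = U * Sig * Vᵀ)
    (hU : Uᵀ * U = 1) (hV : Vᵀ * V = 1)
    (hSigdiag : ∀ (i : Fin m) (j : Fin n), (i : ℕ) ≠ (j : ℕ) → Sig i j = 0)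
    (hσ : ∀ i : Fin (min m n),
      σ i = Sig ⟨i, lt_of_lt_of_le i.isLt (min_le_left m n)⟩
              ⟨i, lt_of_lt_of_le i.isLt (min_le_right m n)⟩)
    (hdesc : ∀ i j : Fin (min m n), i ≤ j → σ j ≤ σ i)
    (hnonneg : ∀ i : Fin (min m n), 0 ≤ σ i)
    (lam : ℝ) (hlam : 0 < lam)
    (hk1 : 1 ≤ k) (hk : k ≤ min m n)
    (hpos : ∀ i : Fin (min m n), (i : ℕ) < k → 0 < σ i)
    (Uk : Matrix (Fin m) (Fin k) ℝ)
    (hUk : ∀ (i : Fin m) (j : Fin k),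
      Uk i j = U i ⟨j, lt_of_lt_of_le j.isLt (le_trans hk (min_le_left m n))⟩)
    (Vk : Matrix (Fin n) (Fin k) ℝ)
    (hVk : ∀ (i : Fin n) (j : Fin k),
      Vk i j = V i ⟨j, lt_of_lt_of_le j.isLt (le_trans hk (min_le_right m n))⟩)
    (Sk : Matrix (Fin k) (Fin k) ℝ)
    (hSk : Sk = Matrix.diagonal (fun i : Fin k => σ ⟨i, lt_of_lt_of_le i.isLt hk⟩))
    (D₀ : Matrix (Fin m) (Fin n) ℝ) (Cstar : Matrix (Fin n) (Fin n) ℝ)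
    (hD₀ : D₀ = Uk * Sk * Vkᵀ) (hCstar : Cstar = Vk * Vkᵀ) :
    D₀ = D₀ * Cstar ∧
      (1 / 2) * (frobeniusNorm Cstar) ^ 2 + (lam / 2) * (frobeniusNorm (D - D₀)) ^ 2 =
        (1 / 2) * (k : ℝ) +
          (lam / 2) *
            ∑ i ∈ Finset.univ.filter (fun i : Fin (min m n) => k ≤ (i : ℕ)), (σ i) ^ 2 :=
  stmt_11_general D U Sig V σ hSVD hU hV hSigdiag hσ lam hk Uk hUk Vk hVk Sk hSk D₀ Cstar hD₀ hCstar
end
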